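/- arXiv:2112.05378 — 3 statements merged into one kernel-verified Lean document; each statement's English description precedes it below -/
import Mathlib

section
/- Let G be a simple graph without isolated vertices and let D be any orientation of G. Then M₁(D) ≤ M₁(G)/2, with equality if and only if D is a sink-source orientation of G. -/
/-! Since `D` orients every edge exactly once, `d_G(u) = d⁺_u + d⁻_u`. Counting each vertex once
per incident edge gives `M₁(G) = ∑ d_G(u)²`, and counting it once per incident arc gives
`M₁(D) = (1/2) ∑ ((d⁺_u)² + (d⁻_u)²)`. Hence `M₁(G)/2 - M₁(D) = ∑ d⁺_u d⁻_u`, a sum of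
nonnegative terms that vanishes exactly when every vertex is a sink or a source. -/

open Finset

attribute [local instance] Classical.propDecidable

/-- The out-degree of `u` in the digraph on `V` with arc relation `A`. -/
noncomputable def outDeg {V : Type*} [Fintype V] (A : V → V → Prop) (u : V) : ℕ :=
  (Finset.univ.filter fun v => A u v).card

/-- The in-degree of `u` in the digraph on `V` with arc relation `A`. -/
noncomputable def inDeg {V : Type*} [Fintype V] (A : V → V → Prop) (u : V) : ℕ :=
  (Finset.univ.filter fun v => A v u).card

/-- The first Zagreb index of a digraph: `(1/2) · ∑_{uv ∈ A} (d⁺_u + d⁻_v)`. -/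
noncomputable def M1D {V : Type*} [Fintype V] (A : V → V → Prop) : ℚ :=
  (1 / 2) * ∑ u : V, ∑ v : V, if A u v then ((outDeg A u : ℚ) + (inDeg A v : ℚ)) else 0

/-- `A` is an orientation of the simple graph `G`: every edge of `G` is replaced by
exactly one of the two possible arcs. -/
def IsOrientation {V : Type*} (G : SimpleGraph V) (A : V → V → Prop) : Prop :=
  (∀ u v, G.Adj u v ↔ (A u v ∨ A v u)) ∧ ∀ u v, ¬(A u v ∧ A v u)

/-- A sink-source orientation: every vertex has out-degree 0 or in-degree 0. -/
def IsSinkSource {V : Type*} [Fintype V] (A : V → V → Prop) : Prop :=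
  ∀ u, outDeg A u = 0 ∨ inDeg A u = 0

/-- The first Zagreb index of a simple graph: `∑_{uv ∈ E(G)} (d_G(u) + d_G(v))`. -/
noncomputable def M1G {V : Type*} [Fintype V] (G : SimpleGraph V) : ℕ :=
  ∑ e ∈ G.edgeFinset,
    Sym2.lift ⟨fun u v => G.degree u + G.degree v, fun _ _ => Nat.add_comm _ _⟩ e

lemma M1G_eq_sum_degree_sq {V : Type*} [Fintype V] (G : SimpleGraph V) :
    M1G G = ∑ v, G.degree v ^ 2 := by
  have hlift : ∀ e ∈ G.edgeFinset,
      Sym2.lift ⟨fun u v => G.degree u + G.degree v, fun _ _ => Nat.add_comm _ _⟩ e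
        = ∑ v, if v ∈ e then G.degree v else 0 := by
    intro e he
    induction e with
    | _ u v =>
      have huv : u ≠ v := G.ne_of_adj (by simpa using he)
      rw [Finset.sum_ite, Finset.sum_const_zero, add_zero,
        show ({w | w ∈ s(u, v)} : Finset V) = {u, v} by ext; simp,
        Finset.sum_pair huv]
      rfl
  rw [M1G, Finset.sum_congr rfl hlift, Finset.sum_comm]
  refine Finset.sum_congr rfl fun v _ => ?_
  rw [← Finset.sum_filter, ← G.incidenceFinset_eq_filter, Finset.sum_const,
    G.card_incidenceFinset_eq_degree, smul_eq_mul, sq]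

section Digraph

variable {V : Type*} [Fintype V] (A : V → V → Prop)

lemma sum_ite_out_eq_outDeg_mul (u : V) (c : ℚ) :
    ∑ v, (if A u v then c else 0) = outDeg A u * c := by
  rw [← Finset.sum_filter, Finset.sum_const, nsmul_eq_mul, outDeg]

lemma sum_ite_in_eq_inDeg_mul (v : V) (c : ℚ) :
    ∑ u, (if A u v then c else 0) = inDeg A v * c := by
  rw [← Finset.sum_filter, Finset.sum_const, nsmul_eq_mul, inDeg]

lemma M1D_eq_sum_sq : M1D A = (∑ u, ((outDeg A u : ℚ) ^ 2 + (inDeg A u : ℚ) ^ 2)) / 2 := by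
  simp only [M1D, ite_add_zero, Finset.sum_add_distrib]
  rw [Finset.sum_comm (f := fun u v => if A u v then (inDeg A v : ℚ) else 0)]
  simp only [sum_ite_out_eq_outDeg_mul, sum_ite_in_eq_inDeg_mul, sq]
  ring

lemma isSinkSource_iff_sum_outDeg_mul_inDeg_eq_zero :
    IsSinkSource A ↔ ∑ u, outDeg A u * inDeg A u = 0 := by
  simp [IsSinkSource, Finset.sum_eq_zero_iff]

end Digraph

namespace IsOrientation

variable {V : Type*} [Fintype V] {G : SimpleGraph V} {A : V → V → Prop}

lemma degree_eq (hA : IsOrientation G A) (u : V) : G.degree u = outDeg A u + inDeg A u := by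
  rw [← G.card_neighborFinset_eq_degree, outDeg, inDeg, ← Finset.card_union_of_disjoint]
  · congr 1
    ext v
    simp [hA.1 u v]
  · exact Finset.disjoint_filter.2 fun v _ huv hvu => hA.2 u v ⟨huv, hvu⟩

lemma half_M1G_eq (hA : IsOrientation G A) :
    (M1G G : ℚ) / 2 = M1D A + (∑ u, outDeg A u * inDeg A u : ℕ) := by
  rw [M1G_eq_sum_degree_sq, M1D_eq_sum_sq]
  simp only [hA.degree_eq]
  push_cast
  rw [Finset.sum_div, Finset.sum_div, ← Finset.sum_add_distrib]
  exact Finset.sum_congr rfl fun u _ => by ring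

end IsOrientation

theorem stmt1_general {V : Type*} [Fintype V] (G : SimpleGraph V)
    (A : V → V → Prop) (hA : IsOrientation G A) :
    M1D A ≤ (M1G G : ℚ) / 2 ∧ (M1D A = (M1G G : ℚ) / 2 ↔ IsSinkSource A) := by
  rw [hA.half_M1G_eq, isSinkSource_iff_sum_outDeg_mul_inDeg_eq_zero, left_eq_add,
    Nat.cast_eq_zero]
  exact ⟨le_add_of_nonneg_right (Nat.cast_nonneg _), Iff.rfl⟩

theorem stmt1 {V : Type*} [Fintype V] (G : SimpleGraph V)
    (hiso : ∀ v : V, 0 < G.degree v) (A : V → V → Prop) (hA : IsOrientation G A) :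
    M1D A ≤ (M1G G : ℚ) / 2 ∧ (M1D A = (M1G G : ℚ) / 2 ↔ IsSinkSource A) :=
  stmt1_general G A hA
end

section
/- Let G be a connected simple graph containing a vertex u with d_G(u) = 2 and neighbors v, w ∈ N_G(u) such that d_G(v) ≥ 2 and vw ∉ E(G). Let G' = G − uw + vw (delete edge uw and add edge vw). Then M₁(G') > M₁(G). -/
/-!
Each vertex contributes its degree once for every incident edge, so `M₁(G) = ∑ᵥ d(v)²`.
Moving the edge `uw` to `vw` lowers `d(u)` by one, raises `d(v)` by one and leaves every other
degree, `d(w)` included, unchanged. Hence `M₁` grows by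
`(d(u) - 1)² - d(u)² + (d(v) + 1)² - d(v)² = 2 (d(v) - d(u) + 1)`, which is positive as soon as
`d(u) ≤ d(v)`.
-/

open Finset

attribute [local instance] Classical.propDecidable

lemma Finset.card_filter_insert_erase_add {α : Type*} [DecidableEq α] (p : α → Prop)
    [DecidablePred p] {s : Finset α} {a b : α} (ha : a ∉ s) (hb : b ∈ s) :
    #{x ∈ insert a (s.erase b) | p x} + (if p b then 1 else 0) =
      #{x ∈ s | p x} + (if p a then 1 else 0) := by
  simp only [card_filter]
  rw [sum_insert fun h => ha (mem_of_mem_erase h), add_assoc, sum_erase_add _ _ hb, add_comm]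

lemma Fintype.sum_sq_lt_sum_sq_of_shift {ι : Type*} [Fintype ι] {f g : ι → ℕ} {a b : ι}
    (hab : a ≠ b) (ha : g a + 1 = f a) (hb : g b = f b + 1)
    (hrest : ∀ x, x ≠ a → x ≠ b → g x = f x) (hle : f a ≤ f b) :
    ∑ x, f x ^ 2 < ∑ x, g x ^ 2 := by
  have hdiff : ∑ x, ((g x : ℤ) ^ 2 - (f x : ℤ) ^ 2) =
      ((g a : ℤ) ^ 2 - (f a : ℤ) ^ 2) + ((g b : ℤ) ^ 2 - (f b : ℤ) ^ 2) :=
    Fintype.sum_eq_add a b hab fun x hx => by rw [hrest x hx.1 hx.2, sub_self]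
  rw [sum_sub_distrib] at hdiff
  zify at ha hb hle ⊢
  nlinarith

namespace SimpleGraph

variable {V : Type*}

lemma edgeSet_deleteEdges_sup_fromEdgeSet {G : SimpleGraph V} {u v w : V} (hvw : v ≠ w) :
    (G.deleteEdges {s(u, w)} ⊔ fromEdgeSet {s(v, w)}).edgeSet =
      insert s(v, w) (G.edgeSet \ {s(u, w)}) := by
  have : s(v, w) ∉ Sym2.diagSet := by simpa using hvw
  ext e
  simp only [edgeSet_sup, edgeSet_deleteEdges, edgeSet_fromEdgeSet, Set.mem_union, Set.mem_sdiff,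
    Set.mem_singleton_iff, Set.mem_insert_iff]
  grind

variable [Fintype V] (G : SimpleGraph V)

lemma sum_darts_fst {M : Type*} [AddCommMonoid M] (f : V → M) :
    ∑ d : G.Dart, f d.fst = ∑ v, G.degree v • f v := by
  rw [← sum_fiberwise_of_maps_to (g := fun d : G.Dart => d.fst) (t := univ) fun _ _ => mem_univ _]
  refine sum_congr rfl fun v _ => ?_
  rw [sum_congr rfl fun d hd => congrArg f (mem_filter.1 hd).2, sum_const,
    ← dart_fst_fiber_card_eq_degree]

lemma sum_darts_edge {M : Type*} [AddCommMonoid M] (f : Sym2 V → M) :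
    ∑ d : G.Dart, f d.edge = 2 • ∑ e ∈ G.edgeFinset, f e := by
  rw [← sum_fiberwise_of_maps_to (g := Dart.edge) (t := G.edgeFinset)
    fun d _ => mem_edgeFinset.2 d.edge_mem, smul_sum]
  refine sum_congr rfl fun e he => ?_
  rw [sum_congr rfl fun d hd => congrArg f (mem_filter.1 hd).2, sum_const,
    dart_edge_fiber_card G e (mem_edgeFinset.1 he)]

theorem M1G_eq_sum_degree_sq : M1G G = ∑ v, G.degree v ^ 2 := by
  have hsnd : ∑ d : G.Dart, G.degree d.snd = ∑ d : G.Dart, G.degree d.fst :=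
    Fintype.sum_bijective Dart.symm Dart.symm_involutive.bijective _ _ fun _ => rfl
  have htwice : 2 * M1G G = 2 * ∑ v, G.degree v ^ 2 :=
    calc 2 * M1G G = ∑ d : G.Dart, (G.degree d.fst + G.degree d.snd) := by
          rw [M1G, ← smul_eq_mul, ← sum_darts_edge]; rfl
      _ = 2 * ∑ d : G.Dart, G.degree d.fst := by rw [sum_add_distrib, hsnd, two_mul]
      _ = 2 * ∑ v, G.degree v ^ 2 := by
          rw [sum_darts_fst G fun v => G.degree v]; simp only [smul_eq_mul, sq]
  omega

variable {G}

-- Stated additively, so that no truncated subtraction occurs in `ℕ`.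
lemma degree_add_of_edgeSet_eq_insert_diff {H : SimpleGraph V} {a b : Sym2 V}
    (ha : a ∉ G.edgeSet) (hb : b ∈ G.edgeSet) (hH : H.edgeSet = insert a (G.edgeSet \ {b}))
    (x : V) :
    H.degree x + (if x ∈ b then 1 else 0) = G.degree x + (if x ∈ a then 1 else 0) := by
  replace hH : H.edgeFinset = insert a (G.edgeFinset.erase b) := by
    ext e; simp [hH, and_comm]
  simp only [← card_incidenceFinset_eq_degree, incidenceFinset_eq_filter, hH]
  exact card_filter_insert_erase_add _ (by simpa using ha) (by simpa using hb)

theorem M1G_lt_of_edgeSet_eq_insert_diff {H : SimpleGraph V} {u v w : V}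
    (hw : G.Adj u w) (hvw : v ≠ w) (hnadj : ¬G.Adj v w) (hle : G.degree u ≤ G.degree v)
    (hH : H.edgeSet = insert s(v, w) (G.edgeSet \ {s(u, w)})) :
    M1G G < M1G H := by
  have huv : u ≠ v := by rintro rfl; exact hnadj hw
  have hdeg := degree_add_of_edgeSet_eq_insert_diff hnadj hw hH
  rw [M1G_eq_sum_degree_sq, M1G_eq_sum_degree_sq]
  refine Fintype.sum_sq_lt_sum_sq_of_shift huv ?_ ?_ (fun x hxu hxv => ?_) hle
  · simpa [huv, hw.ne] using hdeg u
  · simpa [huv.symm, hvw] using hdeg v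
  · simpa [hxu, hxv] using hdeg x

end SimpleGraph

theorem stmt3_general {V : Type*} [Fintype V] (G : SimpleGraph V)
    (u v w : V) (hdeg_u : G.degree u = 2) (hw : G.Adj u w) (hvw : v ≠ w)
    (hdeg_v : 2 ≤ G.degree v) (hnadj : ¬ G.Adj v w) :
    M1G G < M1G (G.deleteEdges {s(u, w)} ⊔ SimpleGraph.fromEdgeSet {s(v, w)}) :=
  G.M1G_lt_of_edgeSet_eq_insert_diff hw hvw hnadj (hdeg_u ▸ hdeg_v)
    (SimpleGraph.edgeSet_deleteEdges_sup_fromEdgeSet hvw)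

theorem stmt3 {V : Type*} [Fintype V] (G : SimpleGraph V) (hconn : G.Connected)
    (u v w : V) (hdeg_u : G.degree u = 2) (hv : G.Adj u v) (hw : G.Adj u w) (hvw : v ≠ w)
    (hdeg_v : 2 ≤ G.degree v) (hnadj : ¬ G.Adj v w) :
    M1G G < M1G (G.deleteEdges {s(u, w)} ⊔ SimpleGraph.fromEdgeSet {s(v, w)}) :=
  stmt3_general G u v w hdeg_u hw hvw hdeg_v hnadj
end

section
/- Let G₄ be the bicyclic graph on 6 vertices {u₁, u₂, v₁, v₂, v₃, v₄} obtained from the graph B₄ (consisting of two triangles v₁v₂v₄ and v₂v₃v₄ sharing the edge v₂v₄, i.e., vertex set {v₁,v₂,v₃,v₄} with edges v₁v₂, v₁v₄, v₂v₃, v₂v₄, v₃v₄) by attaching a pendent vertex u₁ to v₁ and a pendent vertex u₂ to v₂. Then every orientation D of G₄ satisfies M₁(D) < 19. -/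
open Finset

attribute [local instance] Classical.propDecidable

/-- The graph `G₄`: two triangles sharing an edge (`B₄`, on vertices `0,1,2,3` with
`v₁ = 0, v₂ = 1, v₃ = 2, v₄ = 3`) together with pendent vertices `4` at `v₁ = 0`
and `5` at `v₂ = 1`. -/
def G4graph : SimpleGraph (Fin 6) :=
  SimpleGraph.fromEdgeSet {s(0, 1), s(0, 3), s(1, 2), s(1, 3), s(2, 3), s(0, 4), s(1, 5)}


/-!
Summing over arcs, `2 M₁(D) = ∑_v ((d⁺_v)² + (d⁻_v)²) = ∑_v d_v² - 2 ∑_v d⁺_v d⁻_v`, and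
`∑_v d_v² = 40` for `G₄`. Every orientation of a triangle has a vertex with both an in-arc and an
out-arc; on the triangle `v₁v₂v₄` that vertex has degree at least `3`, so `d⁺d⁻ ≥ 2` there and
`M₁(D) ≤ 18`.
-/

section Digraph

variable {V : Type*} [Fintype V]

lemma two_mul_M1D (A : V → V → Prop) :
    2 * M1D A = ∑ u, ((outDeg A u : ℚ) ^ 2 + (inDeg A u : ℚ) ^ 2) := by
  have hout (u : V) : ∑ v, (if A u v then (outDeg A u : ℚ) else 0) = (outDeg A u : ℚ) ^ 2 := by
    rw [← Finset.sum_filter, Finset.sum_const, nsmul_eq_mul, sq]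
    rfl
  have hin (v : V) : ∑ u, (if A u v then (inDeg A v : ℚ) else 0) = (inDeg A v : ℚ) ^ 2 := by
    rw [← Finset.sum_filter, Finset.sum_const, nsmul_eq_mul, sq]
    rfl
  simp only [M1D, ite_add_zero, Finset.sum_add_distrib, hout]
  rw [Finset.sum_comm (f := fun u v => if A u v then (inDeg A v : ℚ) else 0)]
  simp only [hin]
  ring

variable {A : V → V → Prop}

lemma outDeg_pos_of_arc {u v : V} (h : A u v) : 0 < outDeg A u :=
  Finset.card_pos.mpr ⟨v, by simpa using h⟩

lemma inDeg_pos_of_arc {u v : V} (h : A u v) : 0 < inDeg A v :=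
  Finset.card_pos.mpr ⟨u, by simpa using h⟩

variable {G : SimpleGraph V}

lemma IsOrientation.outDeg_add_inDeg (hA : IsOrientation G A) (u : V) :
    outDeg A u + inDeg A u = G.degree u := by
  rw [← SimpleGraph.card_neighborFinset_eq_degree, SimpleGraph.neighborFinset_eq_filter,
    outDeg, inDeg, ← Finset.card_union_of_disjoint]
  · congr 1
    ext v
    simp [hA.1 u v]
  · exact Finset.disjoint_filter.mpr fun v _ huv hvu => hA.2 u v ⟨huv, hvu⟩

lemma IsOrientation.M1D_eq (hA : IsOrientation G A) :
    M1D A = (∑ u, (G.degree u : ℚ) ^ 2) / 2 - ∑ u, (outDeg A u * inDeg A u : ℚ) := by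
  have hsq (u : V) : (outDeg A u : ℚ) ^ 2 + (inDeg A u : ℚ) ^ 2 =
      (G.degree u : ℚ) ^ 2 - 2 * (outDeg A u * inDeg A u) := by
    rw [← hA.outDeg_add_inDeg]
    push_cast
    ring
  have h := two_mul_M1D A
  simp only [hsq, Finset.sum_sub_distrib, ← Finset.mul_sum] at h
  linarith

lemma IsOrientation.exists_inDeg_pos_outDeg_pos_of_triangle (hA : IsOrientation G A) {a b c : V}
    (hab : G.Adj a b) (hbc : G.Adj b c) (hca : G.Adj c a) :
    ∃ x, (x = a ∨ x = b ∨ x = c) ∧ 0 < inDeg A x ∧ 0 < outDeg A x := by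
  rcases (hA.1 a b).1 hab with h₁ | h₁ <;> rcases (hA.1 b c).1 hbc with h₂ | h₂ <;>
    rcases (hA.1 c a).1 hca with h₃ | h₃
  all_goals first
    | exact ⟨a, by simp, inDeg_pos_of_arc ‹A _ a›, outDeg_pos_of_arc ‹A a _›⟩
    | exact ⟨b, by simp, inDeg_pos_of_arc ‹A _ b›, outDeg_pos_of_arc ‹A b _›⟩
    | exact ⟨c, by simp, inDeg_pos_of_arc ‹A _ c›, outDeg_pos_of_arc ‹A c _›⟩

end Digraph

lemma G4graph_degree (u : Fin 6) : G4graph.degree u = ![3, 4, 2, 3, 1, 1] u := by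
  rw [← SimpleGraph.card_neighborFinset_eq_degree, SimpleGraph.neighborFinset_eq_filter]
  fin_cases u <;>
    (rw [Finset.card_eq_sum_ones, Finset.sum_filter, Fin.sum_univ_six]; simp [G4graph])

lemma sum_sq_G4graph_degree : ∑ u, (G4graph.degree u : ℚ) ^ 2 = 40 := by
  simp [G4graph_degree, Fin.sum_univ_six]
  norm_num

theorem stmt5 (A : Fin 6 → Fin 6 → Prop) (hA : IsOrientation G4graph A) :
    M1D A < 19 := by
  obtain ⟨x, hx, hin, hout⟩ := hA.exists_inDeg_pos_outDeg_pos_of_triangle (a := 0) (b := 1)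
    (c := 3) (by simp [G4graph]) (by simp [G4graph]) (by simp [G4graph])
  have hdeg : 3 ≤ outDeg A x + inDeg A x := by
    rw [hA.outDeg_add_inDeg, G4graph_degree]
    rcases hx with rfl | rfl | rfl <;> simp
  have hmixed : (2 : ℚ) ≤ outDeg A x * inDeg A x := by
    norm_cast
    nlinarith
  have hle : (outDeg A x * inDeg A x : ℚ) ≤ ∑ u, (outDeg A u * inDeg A u : ℚ) :=
    Finset.single_le_sum (f := fun u => (outDeg A u * inDeg A u : ℚ))
      (fun u _ => by positivity) (Finset.mem_univ x)
  rw [hA.M1D_eq, sum_sq_G4graph_degree]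
  linarith
end
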